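/- Let V be a closed local subspace of E(W,r), and let a, b, c_0, …, c_k ∈ V and m ∈ ℤ^r satisfy the commutator relation [a(x0,m), b(y0,y)] = y^m Σ_{j=0}^k c_j(y0,y) (1/j!)(∂/∂y0)^j x0^{-1}δ(y0/x0), where a(x0,x) = Σ_{m∈ℤ^r} a(x0,m) x^{−m}. Then a(x0,x)_{j,m} b(x0,x) = c_j(x0,x) for 0 ≤ j ≤ k, and a(x0,x)_{j,m} b(x0,x) = 0 for j > k. -/

import Mathlib

/-!
For `j ≥ 0` only the terms `0 ≤ t ≤ j` of the residue formula for `a_{j,m}b` survive, and after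
reflecting the second sum it becomes `Σ_t (-1)^t C(j,t) [a_{j-t,m}, b_{n+t}]`. The commutator
relation writes each commutator as `Σ_i C(j-t,i) c_i`, and `Σ_t (-1)^t C(j,t) C(j-t,i) = δ_{ij}`
is the coefficient of `X^i` in `((1+X) - 1)^j = X^j`.
-/

/-- Generalized binomial coefficient `C(n,k) = n(n-1)⋯(n-k+1)/k!` for an integer `n`. -/
noncomputable def cchoose (n : ℤ) (k : ℕ) : ℂ :=
  (∏ i ∈ Finset.range k, ((n : ℂ) - (i : ℂ))) / (Nat.factorial k : ℂ)

/-- Coefficients of an element of `E(W,r) = Hom(W, W[[x1^{±1},…,xr^{±1}]]((x0)))`: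
`A n m` is the coefficient of `x0^{-n-1} x^{-m}`. -/
abbrev ECoeff (r : ℕ) (W : Type*) := ℤ → (Fin r → ℤ) → W → W

/-- Membership in `E(W,r)`: on each vector the `x0`-powers are bounded below
(only finitely many negative powers of `x0`). -/
def ETrunc {r : ℕ} {W : Type*} [AddCommGroup W] (A : ECoeff r W) : Prop :=
  ∀ w : W, ∃ N : ℤ, ∀ n : ℤ, N ≤ n → ∀ m : Fin r → ℤ, A n m w = 0

/-- Mutual locality with witness `k`:
`(x0-y0)^k a(x0,x) b(y0,y) = (x0-y0)^k b(y0,y) a(x0,x)`, stated coefficientwise: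
both sides are the coefficients of `x0^P y0^Q x^M y^N`, applied to `w`. -/
def LocalTo {r : ℕ} {W : Type*} [AddCommGroup W] [Module ℂ W]
    (k : ℕ) (A B : ECoeff r W) : Prop :=
  ∀ (w : W) (P Q : ℤ) (M N : Fin r → ℤ),
    ∑ t ∈ Finset.range (k+1), ((-1:ℂ)^t * (k.choose t : ℂ)) •
      A ((k:ℤ)-t-P-1) (-M) (B ((t:ℤ)-Q-1) (-N) w)
    = ∑ t ∈ Finset.range (k+1), ((-1:ℂ)^t * (k.choose t : ℂ)) •
      B ((t:ℤ)-Q-1) (-N) (A ((k:ℤ)-t-P-1) (-M) w)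

/-- The component `a(y0,y)_{m0,m} b(y0,y)` of `Y_E(a(y0,y); z0,z) b(y0,y)`,
given (for mutually local `a, b`) by the residue formula
`a_{m0,m}b = Res_{x0} Res_x x^{m-1} y^{-m}
  [ (x0-y0)^{m0} a(x0,x)b(y0,y) - (-y0+x0)^{m0} b(y0,y)a(x0,x) ]`,
stated coefficientwise: `prodCoeff A B m0 m n q w` is the coefficient of
`y0^{-n-1} y^{-q}` applied to `w`.  Here `(x0-y0)^{m0}` is expanded in
nonnegative powers of `y0` and `(-y0+x0)^{m0}` in nonnegative powers of `x0`. -/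
noncomputable def prodCoeff {r : ℕ} {W : Type*} [AddCommGroup W] [Module ℂ W]
    (A B : ECoeff r W) (m0 : ℤ) (m : Fin r → ℤ) : ECoeff r W :=
  fun n q w =>
    (∑ᶠ t : ℕ, ((-1:ℂ)^t * cchoose m0 t) • A (m0 - t) m (B (n + t) (q - m) w))
    - ∑ᶠ s : ℕ, ((-1:ℂ)^(m0 - (s:ℤ)) * cchoose m0 s) • B (m0 - s + n) (q - m) (A s m w)

open Finset Polynomial

theorem cchoose_natCast (n k : ℕ) : cchoose n k = n.choose k := by
  rw [cchoose, Int.cast_natCast, ← descPochhammer_eval_eq_prod_range,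
    descPochhammer_eval_eq_descFactorial, Nat.descFactorial_eq_factorial_mul_choose, Nat.cast_mul,
    mul_div_cancel_left₀ _ (Nat.cast_ne_zero.2 k.factorial_ne_zero)]

theorem sum_neg_one_pow_mul_choose_mul_choose_sub (j i : ℕ) :
    ∑ t ∈ range (j + 1), (-1 : ℂ) ^ t * j.choose t * (j - t).choose i =
      if i = j then 1 else 0 := by
  have h : (X : ℂ[X]) ^ j =
      ∑ t ∈ range (j + 1), C ((-1 : ℂ) ^ t * j.choose t) * (X + 1) ^ (j - t) := by
    rw [← neg_add_cancel_left 1 X, add_pow, add_comm 1 X]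
    refine sum_congr rfl fun t _ => ?_
    simp only [map_mul, map_pow, map_neg, map_one, map_natCast]
    ring
  simp only [← coeff_X_pow, h, finsetSum_coeff, coeff_C_mul, coeff_X_add_one_pow, mul_assoc]

theorem finsum_mul_cchoose_natCast_smul {M : Type*} [AddCommGroup M] [Module ℂ M]
    (j : ℕ) (g : ℕ → ℂ) (f : ℕ → M) :
    ∑ᶠ t : ℕ, (g t * cchoose j t) • f t = ∑ t ∈ range (j + 1), (g t * j.choose t) • f t := by
  rw [finsum_eq_sum_of_support_subset (s := range (j + 1))]
  · exact sum_congr rfl fun t _ => by rw [cchoose_natCast]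
  · refine fun t ht => mem_range.2 (lt_of_not_ge fun hjt => ht ?_)
    simp [cchoose_natCast, Nat.choose_eq_zero_of_lt (Nat.lt_of_succ_le hjt)]

section

variable {r : ℕ} {W : Type*} [AddCommGroup W] [Module ℂ W]

theorem prodCoeff_natCast (A B : ECoeff r W) (j : ℕ) (m : Fin r → ℤ) (n : ℤ) (q : Fin r → ℤ)
    (w : W) :
    prodCoeff A B j m n q w = ∑ t ∈ range (j + 1), ((-1 : ℂ) ^ t * j.choose t) •
      (A (j - t) m (B (n + t) (q - m) w) - B (n + t) (q - m) (A (j - t) m w)) := by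
  rw [prodCoeff, finsum_mul_cchoose_natCast_smul, finsum_mul_cchoose_natCast_smul]
  nth_rw 2 [← sum_range_reflect]
  rw [← sum_sub_distrib]
  refine sum_congr rfl fun t ht => ?_
  have htj : t ≤ j := Nat.lt_succ_iff.1 (mem_range.1 ht)
  rw [Nat.add_sub_cancel, Nat.choose_symm htj, Nat.cast_sub htj, sub_sub_cancel, zpow_natCast,
    add_comm (t : ℤ) n, smul_sub]

def CommutatorFormula (a b : ECoeff r W) (k : ℕ) (c : ℕ → ECoeff r W) (m : Fin r → ℤ) : Prop :=
  ∀ (α β : ℤ) (δ : Fin r → ℤ) (w : W),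
    a (-α-1) m (b (-β-1) (-δ) w) - b (-β-1) (-δ) (a (-α-1) m w)
    = ∑ j ∈ range (k + 1), cchoose (-α-1) j • c j (-α-β-(j:ℤ)-2) (m - δ) w

variable {a b : ECoeff r W} {k : ℕ} {c : ℕ → ECoeff r W} {m : Fin r → ℤ}

theorem commutator_natCast_eq_sum
    (hcomm : CommutatorFormula a b k c m)
    (p : ℕ) (n : ℤ) (q : Fin r → ℤ) (w : W) :
    a p m (b n (q - m) w) - b n (q - m) (a p m w) =
      ∑ i ∈ range (k + 1), (p.choose i : ℂ) • c i (p + n - i) q w := by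
  have h := hcomm (-p - 1) (-n - 1) (m - q) w
  have hidx (i : ℕ) : -(-(p : ℤ) - 1) - (-n - 1) - i - 2 = p + n - i := by ring
  simp only [hidx] at h
  rw [show -(-(p : ℤ) - 1) - 1 = p by ring, show -(-n - 1) - 1 = n by ring, neg_sub,
    sub_sub_cancel] at h
  simpa only [cchoose_natCast] using h

theorem prodCoeff_natCast_eq_ite
    (hcomm : CommutatorFormula a b k c m)
    (j : ℕ) (n : ℤ) (q : Fin r → ℤ) (w : W) :
    prodCoeff a b j m n q w = if j ≤ k then c j n q w else 0 := by
  calc prodCoeff a b j m n q w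
      = ∑ t ∈ range (j + 1), ((-1 : ℂ) ^ t * j.choose t) •
          ∑ i ∈ range (k + 1), ((j - t).choose i : ℂ) • c i (j + n - i) q w := by
        rw [prodCoeff_natCast]
        refine sum_congr rfl fun t ht => ?_
        have htj : t ≤ j := Nat.lt_succ_iff.1 (mem_range.1 ht)
        rw [← Nat.cast_sub htj, commutator_natCast_eq_sum hcomm, Nat.cast_sub htj]
        simp only [sub_add_add_cancel]
    _ = ∑ i ∈ range (k + 1),
          (∑ t ∈ range (j + 1), (-1 : ℂ) ^ t * j.choose t * (j - t).choose i) •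
            c i (j + n - i) q w := by
        simp only [smul_sum, smul_smul, sum_smul]
        exact sum_comm
    _ = if j ≤ k then c j n q w else 0 := by
        simp only [sum_neg_one_pow_mul_choose_mul_choose_sub, ite_smul, one_smul, zero_smul,
          sum_ite_eq', mem_range, Nat.lt_succ_iff, add_sub_cancel_left]

end

/-- The commutator relation is stated coefficientwise at `x0^α y0^β y^δ` applied to `w`, with
`a(x0,m) = Σ_i a_{i,m} x0^{-i-1}` and
`(1/j!)(∂/∂y0)^j x0⁻¹δ(y0/x0) = Σ_{n∈ℤ} C(n,j) y0^{n-j} x0^{-n-1}`. -/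
theorem stmt15_general {r : ℕ} {W : Type*} [AddCommGroup W] [Module ℂ W]
    (a b : ECoeff r W)
    (k : ℕ) (c : ℕ → ECoeff r W)
    (m : Fin r → ℤ)
    (hcomm : ∀ (α β : ℤ) (δ : Fin r → ℤ) (w : W),
      a (-α-1) m (b (-β-1) (-δ) w) - b (-β-1) (-δ) (a (-α-1) m w)
      = ∑ j ∈ Finset.range (k+1),
          cchoose (-α-1) j • c j (-α-β-(j:ℤ)-2) (m - δ) w) :
    (∀ j : ℕ, j ≤ k → ∀ (n : ℤ) (q : Fin r → ℤ) (w : W),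
      prodCoeff a b (j : ℤ) m n q w = c j n q w) ∧
    (∀ j : ℕ, k < j → ∀ (n : ℤ) (q : Fin r → ℤ) (w : W),
      prodCoeff a b (j : ℤ) m n q w = 0) := by
  refine ⟨fun j hj n q w => ?_, fun j hj n q w => ?_⟩
  · rw [prodCoeff_natCast_eq_ite hcomm, if_pos hj]
  · rw [prodCoeff_natCast_eq_ite hcomm, if_neg (not_le.2 hj)]

/-- Let `V` be a closed local subspace of `E(W,r)` and `a, b, c_0, …, c_k ∈ V`,
`m ∈ ℤ^r`, satisfying the commutator relation
`[a(x0,m), b(y0,y)] = y^m Σ_{j=0}^k c_j(y0,y) (1/j!)(∂/∂y0)^j x0⁻¹δ(y0/x0)`,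
stated coefficientwise at `x0^α y0^β y^δ` applied to `w` (here
`a(x0,m) = Σ_i a_{i,m} x0^{-i-1}` and
`(1/j!)(∂/∂y0)^j x0⁻¹δ(y0/x0) = Σ_{n∈ℤ} C(n,j) y0^{n-j} x0^{-n-1}`).
Then `a_{j,m}b = c_j` for `0 ≤ j ≤ k` and `a_{j,m}b = 0` for `j > k`. -/
theorem stmt15 {r : ℕ} {W : Type*} [AddCommGroup W] [Module ℂ W]
    (V : Submodule ℂ (ECoeff r W))
    (hlin : ∀ a ∈ V, ∀ (n : ℤ) (m : Fin r → ℤ), IsLinearMap ℂ (a n m))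
    (htr : ∀ a ∈ V, ETrunc a)
    (hloc : ∀ a ∈ V, ∀ b ∈ V, ∃ k, LocalTo k a b)
    (hclosed : ∀ a ∈ V, ∀ b ∈ V, ∀ (m0 : ℤ) (mm : Fin r → ℤ),
      prodCoeff a b m0 mm ∈ V)
    (a b : ECoeff r W) (ha : a ∈ V) (hb : b ∈ V)
    (k : ℕ) (c : ℕ → ECoeff r W) (hc : ∀ j ≤ k, c j ∈ V)
    (m : Fin r → ℤ)
    (hcomm : ∀ (α β : ℤ) (δ : Fin r → ℤ) (w : W),
      a (-α-1) m (b (-β-1) (-δ) w) - b (-β-1) (-δ) (a (-α-1) m w)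
      = ∑ j ∈ Finset.range (k+1),
          cchoose (-α-1) j • c j (-α-β-(j:ℤ)-2) (m - δ) w) :
    (∀ j : ℕ, j ≤ k → ∀ (n : ℤ) (q : Fin r → ℤ) (w : W),
      prodCoeff a b (j : ℤ) m n q w = c j n q w) ∧
    (∀ j : ℕ, k < j → ∀ (n : ℤ) (q : Fin r → ℤ) (w : W),
      prodCoeff a b (j : ℤ) m n q w = 0) :=
  stmt15_general a b k c m hcomm
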